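/- arXiv:0709.2941 — 2 statements merged into one kernel-verified Lean document; each statement's English description precedes it below -/
import Mathlib

section
/- The set B(closure of ℂG in D_p(G)) of bounded functions in the D_p-closure of the finitely supported functions is closed in BD_p(G) with respect to the BD_p(G)-norm. -/
open Filter Topology

namespace PHB

variable {G : Type*} [Group G]

/-- One Dirichlet term `‖f(gs⁻¹) − f(g)‖^p`. -/
noncomputable def dpTerm (p : ℝ) (f : G → ℂ) (s g : G) : ℝ := ‖f (g * s⁻¹) - f g‖ ^ p

/-- Membership in `D_p(G)`. -/
def MemDp (p : ℝ) (S : Finset G) (f : G → ℂ) : Prop :=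
  ∀ s ∈ S, Summable (dpTerm p f s)

/-- The Dirichlet `p`-sum `∑_{s∈S}∑_{g∈G} ‖f(gs⁻¹) − f(g)‖^p`. -/
noncomputable def dirSum (p : ℝ) (S : Finset G) (f : G → ℂ) : ℝ :=
  ∑ s ∈ S, ∑' g, dpTerm p f s g

/-- The `D_p`-norm `(∑_{s,g}|f(gs⁻¹)−f(g)|^p + |f(e)|^p)^{1/p}`. -/
noncomputable def dpNorm (p : ℝ) (S : Finset G) (f : G → ℂ) : ℝ :=
  (dirSum p S f + ‖f 1‖ ^ p) ^ (1/p)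

/-- The norm on `D_p(G)/ℂ`: `(∑_{s,g}|f(gs⁻¹)−f(g)|^p)^{1/p}`. -/
noncomputable def qNorm (p : ℝ) (S : Finset G) (f : G → ℂ) : ℝ :=
  dirSum p S f ^ (1/p)

/-- Boundedness of a function. -/
def BddFun (f : G → ℂ) : Prop := ∃ M : ℝ, ∀ g, ‖f g‖ ≤ M

/-- The sup norm. -/
noncomputable def supNorm (f : G → ℂ) : ℝ := ⨆ g, ‖f g‖

/-- The `BD_p`-norm `‖f‖_∞ + (∑_{s,g}|f(gs⁻¹)−f(g)|^p)^{1/p}`. -/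
noncomputable def bdpNorm (p : ℝ) (S : Finset G) (f : G → ℂ) : ℝ :=
  supNorm f + dirSum p S f ^ (1/p)

/-- Membership in `BD_p(G)`: bounded and finite Dirichlet `p`-sum. -/
def MemBDp (p : ℝ) (S : Finset G) (f : G → ℂ) : Prop := BddFun f ∧ MemDp p S f

/-- Membership in `ℓ^p(G)`. -/
def MemLp' (p : ℝ) (f : G → ℂ) : Prop := Summable fun g => ‖f g‖ ^ p

/-- `f` lies in the `D_p`-closure of the finitely supported functions `ℂG`. -/
def InClosCG (p : ℝ) (S : Finset G) (f : G → ℂ) : Prop :=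
  MemDp p S f ∧ ∀ ε : ℝ, 0 < ε →
    ∃ h : G → ℂ, (Function.support h).Finite ∧ dpNorm p S (f - h) < ε

/-- `f` is a bounded function in the `D_p`-closure of `ℂG`. -/
def InBClosCG (p : ℝ) (S : Finset G) (f : G → ℂ) : Prop := BddFun f ∧ InClosCG p S f

/-- `f` lies in the `D_p`-closure of `ℓ^p(G)`. -/
def InClosLp (p : ℝ) (S : Finset G) (f : G → ℂ) : Prop :=
  MemDp p S f ∧ ∀ ε : ℝ, 0 < ε →
    ∃ h : G → ℂ, MemLp' p h ∧ dpNorm p S (f - h) < ε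

/-- `f` is a bounded function in the `D_p`-closure of `ℓ^p(G)`. -/
def InBClosLp (p : ℝ) (S : Finset G) (f : G → ℂ) : Prop := BddFun f ∧ InClosLp p S f

/-- `f` lies in the `D_p`-closure of `ℓ^p(G) ⊕ ℂ`. -/
def InClosLpC (p : ℝ) (S : Finset G) (f : G → ℂ) : Prop :=
  MemDp p S f ∧ ∀ ε : ℝ, 0 < ε →
    ∃ (h : G → ℂ) (c : ℂ), MemLp' p h ∧ dpNorm p S (f - h - Function.const G c) < ε

/-- A character (nonzero multiplicative linear functional) on `BD_p(G)`. -/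
structure BDpChar (p : ℝ) (S : Finset G) where
  toFun : {f : G → ℂ // MemBDp p S f} → ℂ
  map_add : ∀ (f h : {f : G → ℂ // MemBDp p S f}) (hm : MemBDp p S (f.1 + h.1)),
    toFun ⟨f.1 + h.1, hm⟩ = toFun f + toFun h
  map_mul : ∀ (f h : {f : G → ℂ // MemBDp p S f}) (hm : MemBDp p S (f.1 * h.1)),
    toFun ⟨f.1 * h.1, hm⟩ = toFun f * toFun h
  map_smul : ∀ (c : ℂ) (f : {f : G → ℂ // MemBDp p S f}) (hm : MemBDp p S (c • f.1)),
    toFun ⟨c • f.1, hm⟩ = c * toFun f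
  map_one : ∀ hm : MemBDp p S (1 : G → ℂ), toFun ⟨1, hm⟩ = 1

/-- The weak-* topology on the spectrum `Sp(BD_p(G))`. -/
noncomputable instance (p : ℝ) (S : Finset G) : TopologicalSpace (BDpChar p S) :=
  TopologicalSpace.induced BDpChar.toFun Pi.topologicalSpace

/-- The evaluation embedding `i : G → Sp(BD_p(G))`, `(i g)(f) = f(g)`. -/
def evalChar (p : ℝ) (S : Finset G) (g : G) : BDpChar p S where
  toFun := fun f => f.1 g
  map_add := fun _ _ _ => rfl
  map_mul := fun _ _ _ => rfl
  map_smul := fun _ _ _ => rfl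
  map_one := fun _ => rfl

/-- The `p`-Laplacian `Δ_p f(g) = ∑_{s∈S} |f(gs⁻¹)−f(g)|^{p−2}(f(gs⁻¹)−f(g))`. -/
noncomputable def pLap (p : ℝ) (S : Finset G) (f : G → ℂ) (g : G) : ℂ :=
  ∑ s ∈ S, ((‖f (g * s⁻¹) - f g‖ ^ (p - 2) : ℝ) : ℂ) * (f (g * s⁻¹) - f g)

/-- `f` is `p`-harmonic: `f ∈ D_p(G)` and `Δ_p f ≡ 0`. -/
def PHarmonic (p : ℝ) (S : Finset G) (f : G → ℂ) : Prop :=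
  MemDp p S f ∧ ∀ g, pLap p S f g = 0

/-- The `p`-harmonic boundary `∂_p(G) ⊆ Sp(BD_p(G)) \ G`. -/
def pBoundary (p : ℝ) (S : Finset G) : Set (BDpChar p S) :=
  {x | (∀ g : G, x ≠ evalChar p S g) ∧
    ∀ (f : G → ℂ) (hf : MemBDp p S f), InBClosCG p S f → x.toFun ⟨f, hf⟩ = 0}

/-- The word metric on `G` with respect to the generating set `S`. -/
noncomputable def wordDist (S : Finset G) (x y : G) : ℕ :=
  sInf {n | ∃ l : List G, (∀ a ∈ l, a ∈ S) ∧ l.length = n ∧ x⁻¹ * y = l.prod}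

/-- The word length `|g| = d(e,g)`. -/
noncomputable def wordLen (S : Finset G) (g : G) : ℕ := wordDist S 1 g

/-- Right translation `f_x(g) = f(gx⁻¹)`. -/
def translateFun (f : G → ℂ) (x : G) : G → ℂ := fun g => f (g * x⁻¹)

/-- `φ : G → H` is a rough isometry with constants `a, b, c` for the word metrics. -/
def RoughIsom {G H : Type*} [Group G] [Group H] (S : Finset G) (T : Finset H)
    (φ : G → H) (a b c : ℝ) : Prop :=
  1 ≤ a ∧ 0 ≤ b ∧ 0 < c ∧
  (∀ x y : G, (1/a) * (wordDist S x y : ℝ) - b ≤ (wordDist T (φ x) (φ y) : ℝ) ∧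
    (wordDist T (φ x) (φ y) : ℝ) ≤ a * (wordDist S x y : ℝ) + b) ∧
  ∀ h : H, ∃ x : G, (wordDist T (φ x) h : ℝ) < c

/-- `S` is a symmetric generating set of `G`. -/
def SymmGen (S : Finset G) : Prop :=
  (∀ s ∈ S, s⁻¹ ∈ S) ∧ Subgroup.closure (S : Set G) = ⊤

end PHB
namespace PHB

section Aux

variable {G : Type*} [Group G]

lemma dpTerm_nonneg (p : ℝ) (f : G → ℂ) (s g : G) : 0 ≤ dpTerm p f s g :=
  Real.rpow_nonneg (norm_nonneg _) _

lemma dirSum_nonneg (p : ℝ) (S : Finset G) (f : G → ℂ) : 0 ≤ dirSum p S f :=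
  Finset.sum_nonneg fun s _ => tsum_nonneg fun g => dpTerm_nonneg p f s g

lemma diff_triangle (f g : G → ℂ) (a b : G) :
    ‖(f + g) a - (f + g) b‖ ≤ ‖f a - f b‖ + ‖g a - g b‖ := by
  simp only [Pi.add_apply]
  rw [add_sub_add_comm]
  exact norm_add_le _ _

lemma memDp_add {p : ℝ} {S : Finset G} {f g : G → ℂ} (hp : 1 ≤ p)
    (hf : MemDp p S f) (hg : MemDp p S g) : MemDp p S (f + g) := by
  intro s hs
  have h0 : (0:ℝ) ≤ p := zero_le_one.trans hp
  have hf' : Summable fun x => ‖f (x * s⁻¹) - f x‖ ^ p := hf s hs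
  have hg' : Summable fun x => ‖g (x * s⁻¹) - g x‖ ^ p := hg s hs
  have hsum := Real.summable_Lp_add_of_nonneg hp (fun _ => norm_nonneg _)
    (fun _ => norm_nonneg _) hf' hg'
  refine Summable.of_nonneg_of_le (fun x => dpTerm_nonneg _ _ _ _) (fun x => ?_) hsum
  exact Real.rpow_le_rpow (norm_nonneg _) (diff_triangle f g _ _) h0

lemma memDp_neg {p : ℝ} {S : Finset G} {f : G → ℂ} (hf : MemDp p S f) :
    MemDp p S (-f) := by
  intro s hs
  refine (hf s hs).congr fun x => ?_
  simp only [dpTerm, Pi.neg_apply, neg_sub_neg]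
  rw [norm_sub_rev]

lemma memDp_of_finite_support {p : ℝ} {S : Finset G} {h : G → ℂ} (hp : 1 ≤ p)
    (hfin : (Function.support h).Finite) : MemDp p S h := by
  intro s _
  have hp0 : p ≠ 0 := by positivity
  apply summable_of_finite_support
  apply Set.Finite.subset (hfin.union (hfin.image (fun x => x * s)))
  intro x hx
  rw [Function.mem_support] at hx
  by_contra hmem
  simp only [Set.mem_union, Set.mem_image, Function.mem_support] at hmem
  push_neg at hmem
  have h1 : h x = 0 := hmem.1
  have h2 : h (x * s⁻¹) = 0 := by
    by_contra hc
    exact hmem.2 (x * s⁻¹) hc (inv_mul_cancel_right x s)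
  apply hx
  simp [dpTerm, h1, h2, Real.zero_rpow hp0]

lemma summable_prodFun {p : ℝ} {S : Finset G} {f : G → ℂ} (hf : MemDp p S f) :
    Summable fun x : ↥S × G => ‖f (x.2 * (x.1 : G)⁻¹) - f x.2‖ ^ p := by
  refine (summable_prod_of_nonneg fun _ => Real.rpow_nonneg (norm_nonneg _) _).2
    ⟨fun b => ?_, Summable.of_finite⟩
  exact hf b.1 b.2

lemma dirSum_eq_tsum {p : ℝ} {S : Finset G} {f : G → ℂ} (hf : MemDp p S f) :
    dirSum p S f = ∑' x : ↥S × G, ‖f (x.2 * (x.1 : G)⁻¹) - f x.2‖ ^ p := by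
  rw [Summable.tsum_prod' (summable_prodFun hf) (fun b => hf b.1 b.2), tsum_fintype, Finset.univ_eq_attach, dirSum,
    ← Finset.sum_attach S (fun s => ∑' g, dpTerm p f s g)]
  rfl

lemma qSum_add_le {p : ℝ} {S : Finset G} {f g : G → ℂ} (hp : 1 ≤ p)
    (hf : MemDp p S f) (hg : MemDp p S g) :
    dirSum p S (f + g) ^ (1/p) ≤ dirSum p S f ^ (1/p) + dirSum p S g ^ (1/p) := by
  have h0 : (0:ℝ) ≤ p := zero_le_one.trans hp
  have hq0 : (0:ℝ) ≤ 1/p := by positivity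
  have hadd : MemDp p S (f + g) := memDp_add hp hf hg
  obtain ⟨hsumFG, hineq⟩ := Real.Lp_add_le_tsum_of_nonneg hp
    (f := fun x : ↥S × G => ‖f (x.2 * (x.1 : G)⁻¹) - f x.2‖)
    (g := fun x : ↥S × G => ‖g (x.2 * (x.1 : G)⁻¹) - g x.2‖)
    (fun _ => norm_nonneg _) (fun _ => norm_nonneg _)
    (summable_prodFun hf) (summable_prodFun hg)
  rw [dirSum_eq_tsum hf, dirSum_eq_tsum hg, dirSum_eq_tsum hadd]
  refine le_trans (Real.rpow_le_rpow (tsum_nonneg fun _ =>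
    Real.rpow_nonneg (norm_nonneg _) _) ?_ hq0) hineq
  refine Summable.tsum_le_tsum (fun x => ?_) (summable_prodFun hadd) hsumFG
  exact Real.rpow_le_rpow (norm_nonneg _) (diff_triangle f g _ _) h0

lemma rpow_one_div_rpow {a p : ℝ} (ha : 0 ≤ a) (hp0 : p ≠ 0) : (a ^ (1/p)) ^ p = a := by
  rw [← Real.rpow_mul ha, one_div, inv_mul_cancel₀ hp0, Real.rpow_one]

lemma dpNorm_add_le {p : ℝ} {S : Finset G} {f g : G → ℂ} (hp : 1 ≤ p)
    (hf : MemDp p S f) (hg : MemDp p S g) :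
    dpNorm p S (f + g) ≤ dpNorm p S f + dpNorm p S g := by
  have hp0 : (0:ℝ) < p := zero_lt_one.trans_le hp
  have hq0 : (0:ℝ) ≤ 1/p := by positivity
  have hA : 0 ≤ dirSum p S f := dirSum_nonneg p S f
  have hB : 0 ≤ dirSum p S g := dirSum_nonneg p S g
  have hC : 0 ≤ dirSum p S (f + g) := dirSum_nonneg p S (f + g)
  set u : Fin 2 → ℝ := ![dirSum p S f ^ (1/p), ‖f 1‖] with hu_def
  set v : Fin 2 → ℝ := ![dirSum p S g ^ (1/p), ‖g 1‖] with hv_def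
  have hu : ∀ i ∈ (Finset.univ : Finset (Fin 2)), 0 ≤ u i := by
    intro i _
    fin_cases i
    · simpa [hu_def] using Real.rpow_nonneg hA (1/p)
    · simpa [hu_def] using norm_nonneg (f 1)
  have hv : ∀ i ∈ (Finset.univ : Finset (Fin 2)), 0 ≤ v i := by
    intro i _
    fin_cases i
    · simpa [hv_def] using Real.rpow_nonneg hB (1/p)
    · simpa [hv_def] using norm_nonneg (g 1)
  have key := Real.Lp_add_le_of_nonneg (s := Finset.univ) hp hu hv
  rw [Fin.sum_univ_two, Fin.sum_univ_two, Fin.sum_univ_two] at key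
  simp only [hu_def, hv_def, Matrix.cons_val_zero, Matrix.cons_val_one, Matrix.head_cons] at key
  rw [rpow_one_div_rpow hA hp0.ne', rpow_one_div_rpow hB hp0.ne'] at key
  have hC' : dirSum p S (f + g) ≤ (dirSum p S f ^ (1/p) + dirSum p S g ^ (1/p)) ^ p := by
    have := Real.rpow_le_rpow (Real.rpow_nonneg hC _) (qSum_add_le hp hf hg) hp0.le
    rwa [rpow_one_div_rpow hC hp0.ne'] at this
  have he' : ‖(f + g) 1‖ ^ p ≤ (‖f 1‖ + ‖g 1‖) ^ p := by
    refine Real.rpow_le_rpow (norm_nonneg _) ?_ hp0.le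
    exact norm_add_le _ _
  calc dpNorm p S (f + g)
      = (dirSum p S (f + g) + ‖(f + g) 1‖ ^ p) ^ (1/p) := rfl
    _ ≤ ((dirSum p S f ^ (1/p) + dirSum p S g ^ (1/p)) ^ p + (‖f 1‖ + ‖g 1‖) ^ p) ^ (1/p) := by
        apply Real.rpow_le_rpow (by positivity) (add_le_add hC' he') hq0
    _ ≤ (dirSum p S f + ‖f 1‖ ^ p) ^ (1/p) + (dirSum p S g + ‖g 1‖ ^ p) ^ (1/p) := key
    _ = dpNorm p S f + dpNorm p S g := rfl

lemma real_rpow_add_le {a b q : ℝ} (ha : 0 ≤ a) (hb : 0 ≤ b) (hq0 : 0 ≤ q) (hq1 : q ≤ 1) :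
    (a + b) ^ q ≤ a ^ q + b ^ q := by
  lift a to NNReal using ha
  lift b to NNReal using hb
  exact_mod_cast NNReal.rpow_add_le_add_rpow a b hq0 hq1

lemma norm_apply_le_supNorm {f : G → ℂ} (hb : BddFun f) (g : G) : ‖f g‖ ≤ supNorm f := by
  obtain ⟨M, hM⟩ := hb
  exact le_ciSup ⟨M, by rintro _ ⟨x, rfl⟩; exact hM x⟩ g

lemma dpNorm_le_bdpNorm {p : ℝ} {S : Finset G} {f : G → ℂ} (hp : 1 ≤ p) (hb : BddFun f) :
    dpNorm p S f ≤ bdpNorm p S f := by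
  have hp0 : (0:ℝ) < p := zero_lt_one.trans_le hp
  have h1 : (1:ℝ)/p ≤ 1 := by rw [div_le_one hp0]; exact hp
  have step : dpNorm p S f ≤ dirSum p S f ^ (1/p) + ‖f 1‖ := by
    rw [dpNorm]
    calc (dirSum p S f + ‖f 1‖ ^ p) ^ (1/p)
        ≤ dirSum p S f ^ (1/p) + (‖f 1‖ ^ p) ^ (1/p) :=
          real_rpow_add_le (dirSum_nonneg p S f) (by positivity) (by positivity) h1
      _ = dirSum p S f ^ (1/p) + ‖f 1‖ := by
          rw [← Real.rpow_mul (norm_nonneg _), mul_one_div, div_self hp0.ne', Real.rpow_one]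
  have h2 : ‖f 1‖ ≤ supNorm f := norm_apply_le_supNorm hb 1
  rw [bdpNorm]
  linarith

lemma bddFun_sub {f g : G → ℂ} (hf : BddFun f) (hg : BddFun g) : BddFun (f - g) := by
  obtain ⟨M, hM⟩ := hf
  obtain ⟨N, hN⟩ := hg
  exact ⟨M + N, fun x => (norm_sub_le _ _).trans (add_le_add (hM x) (hN x))⟩

end Aux

end PHB

/-- the set of bounded functions in the `D_p`-closure of `ℂG` is
closed in `BD_p(G)` with respect to the `BD_p`-norm. -/
theorem BClosCG_closed {G : Type*} [Group G] [Infinite G] (S : Finset G)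
    (hS : PHB.SymmGen S) (p : ℝ) (hp : 1 ≤ p) :
    ∀ (u : ℕ → (G → ℂ)) (f : G → ℂ), (∀ n, PHB.InBClosCG p S (u n)) →
      PHB.MemBDp p S f →
      Filter.Tendsto (fun n => PHB.bdpNorm p S (f - u n)) Filter.atTop (nhds 0) →
      PHB.InBClosCG p S f := by
  intro u f hu hf htend
  refine ⟨hf.1, hf.2, ?_⟩
  intro ε hε
  have hhalf : 0 < ε/2 := half_pos hε
  obtain ⟨n, hn⟩ := (htend.eventually_lt_const hhalf).exists
  obtain ⟨h, hfin, hlt⟩ := (hu n).2.2 (ε/2) hhalf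
  refine ⟨h, hfin, ?_⟩
  have hmem1 : PHB.MemDp p S (f - u n) := by
    rw [sub_eq_add_neg]
    exact PHB.memDp_add hp hf.2 (PHB.memDp_neg (hu n).2.1)
  have hmem2 : PHB.MemDp p S (u n - h) := by
    rw [sub_eq_add_neg]
    exact PHB.memDp_add hp (hu n).2.1 (PHB.memDp_neg (PHB.memDp_of_finite_support hp hfin))
  have hkey : PHB.dpNorm p S (f - h) ≤ PHB.dpNorm p S (f - u n) + PHB.dpNorm p S (u n - h) := by
    have := PHB.dpNorm_add_le hp hmem1 hmem2
    rwa [sub_add_sub_cancel] at this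
  have hb : PHB.BddFun (f - u n) := PHB.bddFun_sub hf.1 (hu n).1
  have h2 : PHB.dpNorm p S (f - u n) ≤ PHB.bdpNorm p S (f - u n) :=
    PHB.dpNorm_le_bdpNorm hp hb
  linarith
end

section
/- Let φ : G → H be a rough isometry and ψ : H → G a rough inverse with d_G((ψ∘φ)(g), g) ≤ a(c+b) for all g ∈ G. If f ∈ D_p(G), then |f((ψ∘φ)(g)) − f(g)| → 0 as the word length |g| → ∞. -/
open Filter Topology

/-!
Summability of `‖f(gs⁻¹) − f(g)‖^p` makes every edge difference of `f` small outside a finite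
set, hence outside a large ball around the identity. Since `ψ ∘ φ` moves each point by at most
`n = ⌈a(c+b)⌉` steps, `f(ψ(φ g)) − f(g)` telescopes along a word of length at most `n` all of whose
vertices stay within distance `n` of `g`; once `|g|` is large, all `n` terms are small.
-/

namespace PHB

variable {G : Type*} [Group G] {S : Finset G}

theorem SymmGen.exists_list_prod_eq (hS : SymmGen S) (g : G) :
    ∃ l : List G, (∀ a ∈ l, a ∈ S) ∧ l.prod = g := by
  have hg : g ∈ (Subgroup.closure (S : Set G)).toSubmonoid := by simp [hS.2]
  rw [Subgroup.closure_toSubmonoid] at hg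
  obtain ⟨l, hl, rfl⟩ := Submonoid.exists_list_of_mem_closure hg
  refine ⟨l, fun a ha => ?_, rfl⟩
  rcases hl a ha with h | h
  exacts [h, by simpa using hS.1 _ h]

theorem wordDist_le_length {x y : G} {l : List G} (hl : ∀ a ∈ l, a ∈ S)
    (hxy : x⁻¹ * y = l.prod) : wordDist S x y ≤ l.length :=
  Nat.sInf_le ⟨l, hl, rfl, hxy⟩

theorem SymmGen.exists_list_length_eq_wordDist (hS : SymmGen S) (x y : G) :
    ∃ l : List G, (∀ a ∈ l, a ∈ S) ∧ l.length = wordDist S x y ∧ x⁻¹ * y = l.prod := by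
  obtain ⟨l, hl, hprod⟩ := hS.exists_list_prod_eq (x⁻¹ * y)
  exact Nat.sInf_mem
    (s := {n | ∃ l : List G, (∀ a ∈ l, a ∈ S) ∧ l.length = n ∧ x⁻¹ * y = l.prod})
    ⟨l.length, l, hl, rfl, hprod.symm⟩

theorem SymmGen.wordDist_triangle (hS : SymmGen S) (x y z : G) :
    wordDist S x z ≤ wordDist S x y + wordDist S y z := by
  obtain ⟨l₁, hl₁, hlen₁, hprod₁⟩ := hS.exists_list_length_eq_wordDist x y
  obtain ⟨l₂, hl₂, hlen₂, hprod₂⟩ := hS.exists_list_length_eq_wordDist y z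
  have hprod : x⁻¹ * z = (l₁ ++ l₂).prod := by
    rw [List.prod_append, ← hprod₁, ← hprod₂]
    group
  calc wordDist S x z ≤ (l₁ ++ l₂).length :=
        wordDist_le_length (fun a ha => (List.mem_append.mp ha).elim (hl₁ a) (hl₂ a)) hprod
    _ = wordDist S x y + wordDist S y z := by rw [List.length_append, hlen₁, hlen₂]

theorem SymmGen.eventually_forall_of_wordDist_le (hS : SymmGen S) {P : G → Prop}
    (hP : ∀ᶠ y in cofinite, P y) (n : ℕ) :
    ∀ᶠ g in comap (wordLen S) atTop, ∀ y, wordDist S y g ≤ n → P y := by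
  obtain ⟨M, hM⟩ := ((eventually_cofinite.mp hP).image (wordLen S)).bddAbove
  refine eventually_comap.mpr ?_
  filter_upwards [eventually_gt_atTop (M + n)] with m hm g rfl y hyg
  by_contra hy
  have hyM : wordLen S y ≤ M := hM ⟨y, hy, rfl⟩
  have := hS.wordDist_triangle 1 y g
  simp only [wordLen] at hm hyM
  omega

theorem MemDp.tendsto_cofinite_norm_sub {p : ℝ} {f : G → ℂ} (hf : MemDp p S f) (hp : 0 < p)
    {s : G} (hs : s ∈ S) :
    Tendsto (fun g => ‖f (g * s⁻¹) - f g‖) cofinite (𝓝 0) := by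
  have h := (hf s hs).tendsto_cofinite_zero.rpow_const_nhds_zero (inv_pos.mpr hp)
  refine h.congr fun g => ?_
  exact Real.rpow_rpow_inv (norm_nonneg _) hp.ne'

theorem norm_sub_le_length_mul {f : G → ℂ} {ε : ℝ} (l : List G) (hl : ∀ a ∈ l, a ∈ S)
    (x : G)
    (hsmall : ∀ y, wordDist S y (x * l.prod) ≤ l.length →
      ∀ s ∈ S, ‖f (y * s⁻¹) - f y‖ ≤ ε) :
    ‖f (x * l.prod) - f x‖ ≤ l.length * ε := by
  induction l generalizing x with
  | nil => simp
  | cons s l ih =>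
    have hs : s ∈ S := hl s List.mem_cons_self
    have hl' : ∀ a ∈ l, a ∈ S := fun a ha => hl a (List.mem_cons_of_mem _ ha)
    have hend : x * (s :: l).prod = x * s * l.prod := by rw [List.prod_cons, mul_assoc]
    rw [hend] at hsmall ⊢
    have hrest : ‖f (x * s * l.prod) - f (x * s)‖ ≤ l.length * ε :=
      ih hl' (x * s) fun y hy => hsmall y (hy.trans (by simp))
    -- the step `x ↦ x * s` is the Dirichlet term of `s` at its endpoint `x * s`
    have hstep : ‖f (x * s) - f x‖ ≤ ε := by
      have hdist : wordDist S (x * s) (x * s * l.prod) ≤ (s :: l).length :=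
        (wordDist_le_length hl' (by group)).trans (by simp)
      simpa [norm_sub_rev] using hsmall (x * s) hdist s hs
    calc ‖f (x * s * l.prod) - f x‖
        ≤ ‖f (x * s * l.prod) - f (x * s)‖ + ‖f (x * s) - f x‖ :=
          norm_sub_le_norm_sub_add_norm_sub _ _ _
      _ ≤ l.length * ε + ε := add_le_add hrest hstep
      _ = (s :: l).length * ε := by push_cast [List.length_cons]; ring

theorem SymmGen.norm_sub_le_wordDist_mul (hS : SymmGen S) {f : G → ℂ} {ε : ℝ} (x g : G)
    (hsmall : ∀ y, wordDist S y g ≤ wordDist S x g → ∀ s ∈ S, ‖f (y * s⁻¹) - f y‖ ≤ ε) :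
    ‖f x - f g‖ ≤ wordDist S x g * ε := by
  obtain ⟨l, hl, hlen, hprod⟩ := hS.exists_list_length_eq_wordDist x g
  obtain rfl : g = x * l.prod := by rw [← hprod]; group
  rw [norm_sub_rev, ← hlen]
  exact norm_sub_le_length_mul l hl x fun y hy => hsmall y (hlen ▸ hy)

theorem SymmGen.tendsto_norm_sub_of_wordDist_le (hS : SymmGen S) {p : ℝ} (hp : 0 < p)
    {f : G → ℂ} (hf : MemDp p S f) {u : G → G} {n : ℕ} (hu : ∀ g, wordDist S (u g) g ≤ n) :
    Tendsto (fun g => ‖f (u g) - f g‖) (comap (wordLen S) atTop) (𝓝 0) := by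
  rw [Metric.tendsto_nhds]
  intro ε hε
  set δ := ε / (n + 1)
  have hδ : 0 < δ := by positivity
  have hsmall : ∀ᶠ y in cofinite, ∀ s ∈ S, ‖f (y * s⁻¹) - f y‖ ≤ δ :=
    (eventually_all_finset S).mpr fun s hs =>
      ((hf.tendsto_cofinite_norm_sub hp hs).eventually (eventually_le_nhds hδ))
  filter_upwards [hS.eventually_forall_of_wordDist_le hsmall n] with g hg
  have hdist : (wordDist S (u g) g : ℝ) ≤ n := by exact_mod_cast hu g
  rw [Real.dist_0_eq_abs, abs_norm]
  calc ‖f (u g) - f g‖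
      ≤ wordDist S (u g) g * δ :=
        hS.norm_sub_le_wordDist_mul (u g) g fun y hy => hg y (hy.trans (hu g))
    _ ≤ n * δ := by gcongr
    _ < ε := by
      rw [mul_div_assoc', div_lt_iff₀ (by positivity)]
      nlinarith

end PHB

theorem roughInverse_diff_tendsto_zero_general {G H : Type*} [Group G] (S : Finset G)
    (hS : PHB.SymmGen S) (p : ℝ) (hp : 1 ≤ p)
    (φ : G → H) (ψ : H → G) (a b c : ℝ)
    (hψ : ∀ g : G, (PHB.wordDist S (ψ (φ g)) g : ℝ) ≤ a * (c + b))
    (f : G → ℂ) (hf : PHB.MemDp p S f) :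
    Filter.Tendsto (fun g : G => ‖f (ψ (φ g)) - f g‖)
      (Filter.comap (fun g : G => PHB.wordLen S g) Filter.atTop) (nhds 0) :=
  hS.tendsto_norm_sub_of_wordDist_le (by linarith) hf
    (n := ⌈a * (c + b)⌉₊) fun g => by exact_mod_cast (hψ g).trans (Nat.le_ceil _)

/-- if `ψ` is a rough inverse of the rough isometry `φ` and
`f ∈ D_p(G)`, then `|f(ψ(φ(g))) − f(g)| → 0` as the word length `|g| → ∞`. -/
theorem roughInverse_diff_tendsto_zero {G H : Type*} [Group G] [Infinite G]
    [Group H] [Infinite H] (S : Finset G) (T : Finset H)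
    (hS : PHB.SymmGen S) (hT : PHB.SymmGen T) (p : ℝ) (hp : 1 ≤ p)
    (φ : G → H) (ψ : H → G) (a b c : ℝ) (hφ : PHB.RoughIsom S T φ a b c)
    (hψ : ∀ g : G, (PHB.wordDist S (ψ (φ g)) g : ℝ) ≤ a * (c + b))
    (f : G → ℂ) (hf : PHB.MemDp p S f) :
    Filter.Tendsto (fun g : G => ‖f (ψ (φ g)) - f g‖)
      (Filter.comap (fun g : G => PHB.wordLen S g) Filter.atTop) (nhds 0) :=
  roughInverse_diff_tendsto_zero_general S hS p hp φ ψ a b c hψ f hf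
end
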